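/- arXiv:2510.09611 — 3 statements merged into one kernel-verified Lean document; each statement's English description precedes it below -/
import Mathlib

section
/- Let d ≥ 1, n ≥ 1, r > 0, and let F : ℤ^d → GL(n,ℂ) satisfy F(y) = I for all y ∉ B_r ∩ ℤ^d. Let ρ > 2r, let θ ∈ S^{d-1} \ Ω_ρ, and let x ∈ B_r ∩ ℤ^d. Then the oriented line γ_{x,θ} = {x + tθ : t ∈ ℝ} contains no lattice point of B_r ∩ ℤ^d other than x, and consequently S(F)(γ_{x,θ}) = F(x). -/
/-!
Two distinct lattice points `x, z` of `B_r` on the line through `x` with unit direction `θ`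
differ by `w = z - x = t • θ`, so `±w` is a lattice vector pointing in direction `θ` with
`‖w‖ / gcd(w) ≤ ‖w‖ ≤ 2r < ρ`, i.e. `θ ∈ Ω_ρ`. Hence the only lattice point of the line that can
carry a nontrivial factor is `x` itself, and the ordered product reduces to `F x`.
-/

noncomputable section

open Matrix

/-- Embedding of the lattice `ℤ^d` into Euclidean `ℝ^d`. -/
def emb {d : ℕ} (z : Fin d → ℤ) : EuclideanSpace ℝ (Fin d) := WithLp.toLp 2 (fun i => (z i : ℝ))

/- Ordered product of `Φ` over `supp`: the factors are multiplied so that larger values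
of `key` contribute factors further to the left (the value is `1` if no strictly
`key`-decreasing enumeration of `supp` by a list exists). -/
open Classical in
noncomputable def oprodBy {α G : Type*} [Monoid G] (Φ : α → G) (key : α → ℝ) (supp : Set α) : G :=
  if h : ∃ l : List α, l.Pairwise (fun a b => key b < key a) ∧ ∀ a, a ∈ l ↔ a ∈ supp
  then (h.choose.map Φ).prod else 1

/-- The discrete non-abelian X-ray transform of `F` along the oriented line through `x`
with direction `θ`: the ordered product of `F y` over lattice points `y` on the line,
the point furthest along the orientation contributing the leftmost factor. -/
noncomputable def discS {d : ℕ} {G : Type*} [Monoid G] (F : (Fin d → ℤ) → G)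
    (x θ : EuclideanSpace ℝ (Fin d)) : G :=
  oprodBy F (fun z => ∑ i, ((z i : ℝ) - x i) * θ i)
    {z | (∃ t : ℝ, emb z = x + t • θ) ∧ F z ≠ 1}

lemma oprodBy_eq_prod {α G : Type*} [Monoid G] {Φ : α → G} {key : α → ℝ} {supp : Set α}
    {l : List α} (hsorted : l.Pairwise fun a b => key b < key a) (hmem : ∀ a, a ∈ l ↔ a ∈ supp) :
    oprodBy Φ key supp = (l.map Φ).prod := by
  have hex : ∃ l : List α, l.Pairwise (fun a b => key b < key a) ∧ ∀ a, a ∈ l ↔ a ∈ supp :=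
    ⟨l, hsorted, hmem⟩
  obtain ⟨hsorted', hmem'⟩ := hex.choose_spec
  have nodup_of_sorted {l : List α} (h : l.Pairwise fun a b => key b < key a) : l.Nodup :=
    h.imp fun hab heq => (heq ▸ hab).false
  have hperm : hex.choose.Perm l :=
    (List.perm_ext_iff_of_nodup (nodup_of_sorted hsorted') (nodup_of_sorted hsorted)).2
      fun a => (hmem' a).trans (hmem a).symm
  rw [oprodBy, dif_pos hex,
    hperm.eq_of_pairwise (fun _ _ _ _ hab hba => (lt_asymm hab hba).elim) hsorted' hsorted]

lemma discS_eq_of_forall_mem_line {d : ℕ} {G : Type*} [Monoid G] (F : (Fin d → ℤ) → G)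
    (x : Fin d → ℤ) (θ : EuclideanSpace ℝ (Fin d))
    (h : ∀ z, (∃ t : ℝ, emb z = emb x + t • θ) → F z ≠ 1 → z = x) :
    discS F (emb x) θ = F x := by
  unfold discS
  by_cases hFx : F x = 1
  · rw [hFx, oprodBy_eq_prod (l := []) List.Pairwise.nil]
    · rfl
    · rintro a
      simp only [List.not_mem_nil, Set.mem_ofPred_eq, false_iff, not_and, not_not]
      intro hline
      by_contra hFa
      exact hFa (h a hline hFa ▸ hFx)
  · rw [oprodBy_eq_prod (l := [x]) (List.pairwise_singleton _ _)]
    · simp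
    · rintro a
      simp only [List.mem_singleton, Set.mem_ofPred_eq]
      constructor
      · rintro rfl
        exact ⟨⟨0, by simp⟩, hFx⟩
      · rintro ⟨hline, hFa⟩
        exact h a hline hFa

section Lattice

variable {d : ℕ}

lemma emb_sub (z x : Fin d → ℤ) : emb (z - x) = emb z - emb x := by
  ext i
  simp [emb]

lemma emb_neg (z : Fin d → ℤ) : emb (-z) = -emb z := by
  ext i
  simp [emb]

lemma emb_injective : Function.Injective (emb (d := d)) := by
  intro a b h
  funext i
  simpa [emb] using congrArg (fun v : EuclideanSpace ℝ (Fin d) => v i) h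

lemma one_le_gcd_natAbs {w : Fin d → ℤ} (hw : w ≠ 0) :
    1 ≤ ((Finset.univ.gcd fun i => (w i).natAbs : ℕ) : ℝ) := by
  have hgcd : Finset.univ.gcd (fun i => (w i).natAbs) ≠ 0 := by
    intro h
    exact hw (funext fun i => by simpa using Finset.gcd_eq_zero_iff.mp h i (Finset.mem_univ i))
  exact_mod_cast Nat.one_le_iff_ne_zero.mpr hgcd

/-- The set `Ω_ρ`. -/
def rationalDirections (d : ℕ) (ρ : ℝ) : Set (EuclideanSpace ℝ (Fin d)) :=
  {θ | ∃ z : Fin d → ℤ, z ≠ 0 ∧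
    ‖emb z‖ / ((Finset.univ.gcd fun i => (z i).natAbs : ℕ) : ℝ) ≤ ρ ∧
    θ = ‖emb z‖⁻¹ • emb z}

variable {θ : EuclideanSpace ℝ (Fin d)} {ρ t : ℝ}

lemma mem_rationalDirections_of_emb_eq_pos_smul (hθ : ‖θ‖ = 1) (ht : 0 < t)
    {w : Fin d → ℤ} (hw : emb w = t • θ) (hwρ : ‖emb w‖ ≤ ρ) : θ ∈ rationalDirections d ρ := by
  have hnorm : ‖emb w‖ = t := by rw [hw, norm_smul, hθ, mul_one, Real.norm_of_nonneg ht.le]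
  have hw0 : w ≠ 0 := by
    rintro rfl
    have hemb0 : emb (0 : Fin d → ℤ) = 0 := by ext; simp [emb]
    rw [hemb0, norm_zero] at hnorm
    exact ht.ne hnorm
  refine ⟨w, hw0, (div_le_self (norm_nonneg _) (one_le_gcd_natAbs hw0)).trans hwρ, ?_⟩
  rw [hnorm, hw, smul_smul, inv_mul_cancel₀ ht.ne', one_smul]

lemma mem_rationalDirections_of_emb_eq_smul (hθ : ‖θ‖ = 1) (ht : t ≠ 0)
    {w : Fin d → ℤ} (hw : emb w = t • θ) (hwρ : ‖emb w‖ ≤ ρ) : θ ∈ rationalDirections d ρ := by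
  rcases ht.lt_or_gt with hneg | hpos
  · refine mem_rationalDirections_of_emb_eq_pos_smul hθ (neg_pos.2 hneg) (w := -w) ?_ ?_
    · rw [emb_neg, hw, neg_smul]
    · rwa [emb_neg, norm_neg]
  · exact mem_rationalDirections_of_emb_eq_pos_smul hθ hpos hw hwρ

lemma lt_norm_emb_sub_of_notMem_rationalDirections (hθρ : θ ∉ rationalDirections d ρ)
    (hθ : ‖θ‖ = 1) {x z : Fin d → ℤ} (hzx : z ≠ x) (hline : emb z = emb x + t • θ) :
    ρ < ‖emb z - emb x‖ := by
  by_contra! hle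
  have ht : t ≠ 0 := by
    rintro rfl
    exact hzx (emb_injective (by simpa using hline))
  have hw : emb (z - x) = t • θ := by rw [emb_sub, hline, add_sub_cancel_left]
  exact hθρ (mem_rationalDirections_of_emb_eq_smul hθ ht hw (by rwa [emb_sub]))

end Lattice

theorem stmt2_general (d n : ℕ) (r ρ : ℝ) (hρ : 2 * r < ρ)
    (F : (Fin d → ℤ) → GL (Fin n) ℂ) (hF : ∀ y : Fin d → ℤ, ¬ ‖emb y‖ ≤ r → F y = 1)
    (θ : EuclideanSpace ℝ (Fin d)) (hθ : ‖θ‖ = 1)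
    (hθρ : ¬ ∃ z : Fin d → ℤ, z ≠ 0 ∧
      ‖emb z‖ / ((Finset.univ.gcd fun i => (z i).natAbs : ℕ) : ℝ) ≤ ρ ∧
      θ = ‖emb z‖⁻¹ • emb z)
    (x : Fin d → ℤ) (hx : ‖emb x‖ ≤ r) :
    (∀ z : Fin d → ℤ, ‖emb z‖ ≤ r → (∃ t : ℝ, emb z = emb x + t • θ) → z = x) ∧
    discS F (emb x) θ = F x := by
  have hunique : ∀ z : Fin d → ℤ, ‖emb z‖ ≤ r → (∃ t : ℝ, emb z = emb x + t • θ) → z = x := by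
    rintro z hz ⟨t, hline⟩
    by_contra hzx
    have hfar := lt_norm_emb_sub_of_notMem_rationalDirections hθρ hθ hzx hline
    have hnear := norm_sub_le (emb z) (emb x)
    linarith
  exact ⟨hunique, discS_eq_of_forall_mem_line F x θ fun z hline hFz =>
    hunique z (not_imp_comm.1 (hF z) hFz) hline⟩

/-- if F = I outside B_r ∩ ℤ^d, ρ > 2r and the unit direction θ is not in
Ω_ρ (the directions of rationality degree at most ρ), then for any lattice point
x ∈ B_r the line through x with direction θ contains no other lattice point of B_r,
and the discrete non-abelian X-ray transform along it equals F x. -/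
theorem stmt2 (d n : ℕ) (hd : 1 ≤ d) (hn : 1 ≤ n) (r ρ : ℝ) (hr : 0 < r) (hρ : 2 * r < ρ)
    (F : (Fin d → ℤ) → GL (Fin n) ℂ) (hF : ∀ y : Fin d → ℤ, ¬ ‖emb y‖ ≤ r → F y = 1)
    (θ : EuclideanSpace ℝ (Fin d)) (hθ : ‖θ‖ = 1)
    (hθρ : ¬ ∃ z : Fin d → ℤ, z ≠ 0 ∧
      ‖emb z‖ / ((Finset.univ.gcd fun i => (z i).natAbs : ℕ) : ℝ) ≤ ρ ∧
      θ = ‖emb z‖⁻¹ • emb z)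
    (x : Fin d → ℤ) (hx : ‖emb x‖ ≤ r) :
    (∀ z : Fin d → ℤ, ‖emb z‖ ≤ r → (∃ t : ℝ, emb z = emb x + t • θ) → z = x) ∧
    discS F (emb x) θ = F x :=
  stmt2_general d n r ρ hρ F hF θ hθ hθρ x hx
end
end

section
/- Let n ≥ 1, r > 0, and let F : ℤ² → GL(n,ℂ) satisfy F(y) = I for all y ∉ B_r ∩ ℤ². Let z ∈ B_r ∩ ℤ² with z ≠ 0, and set γ_z⁺ = {y ∈ γ_z : (y−z)·γ̂_z > 0} and γ_z⁻ = {y ∈ γ_z : (y−z)·γ̂_z < 0}, where γ̂_z = (−z_2, z_1)/|z| is the direction of γ_z. Then: (i) every ζ ∈ γ_z ∩ ℤ² with ζ ≠ z and F(ζ) ≠ I satisfies |z| < |ζ| ≤ r; (ii) S(F)(γ_z) = A₊ · F(z) · A₋, where A₊ is the ordered product of F(ζ) over ζ ∈ γ_z⁺ ∩ ℤ² and A₋ is the ordered product of F(ζ) over ζ ∈ γ_z⁻ ∩ ℤ² (each ordered so that the point furthest along the orientation contributes the leftmost factor); (iii) consequently F(z) = A₊⁻¹ · S(F)(γ_z)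 · A₋⁻¹. -/
noncomputable section

open Matrix

theorem desc_unique {α : Type*} (key : α → ℝ) (l l' : List α)
    (hl : l.Pairwise (fun a b => key b < key a)) (hl' : l'.Pairwise (fun a b => key b < key a))
    (hmem : ∀ a, a ∈ l ↔ a ∈ l') : l = l' := by
  haveI : IsAntisymm α (fun a b => key b < key a) := ⟨fun a b h1 h2 => absurd (h2.trans h1) (lt_irrefl _)⟩
  have hd : l.Nodup := hl.imp (fun h heq => by subst heq; exact lt_irrefl _ h)
  have hd' : l'.Nodup := hl'.imp (fun h heq => by subst heq; exact lt_irrefl _ h)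
  exact List.Perm.eq_of_pairwise (fun a b _ _ h1 h2 => absurd (h2.trans h1) (lt_irrefl _)) hl hl'
    ((List.perm_ext_iff_of_nodup hd hd').2 hmem)

theorem oprodBy_eq {α G : Type*} [Monoid G] (Φ : α → G) (key : α → ℝ) (S : Set α)
    (l : List α) (hl : l.Pairwise (fun a b => key b < key a)) (hmem : ∀ a, a ∈ l ↔ a ∈ S) :
    oprodBy Φ key S = (l.map Φ).prod := by
  have h : ∃ l : List α, l.Pairwise (fun a b => key b < key a) ∧ ∀ a, a ∈ l ↔ a ∈ S := ⟨l, hl, hmem⟩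
  rw [oprodBy, dif_pos h,
    desc_unique key h.choose l h.choose_spec.1 hl (fun a => (h.choose_spec.2 a).trans (hmem a).symm)]

theorem exists_desc_list {α : Type*} (key : α → ℝ) (S : Finset α)
    (hinj : ∀ a ∈ S, ∀ b ∈ S, key a = key b → a = b) :
    ∃ l : List α, l.Pairwise (fun a b => key b < key a) ∧ ∀ a, a ∈ l ↔ a ∈ S := by
  classical
  induction S using Finset.strongInduction with
  | _ S ih =>
    rcases S.eq_empty_or_nonempty with rfl | hne
    · exact ⟨[], by simp, by simp⟩
    · obtain ⟨b, hb, hmax⟩ := S.exists_max_image key hne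
      obtain ⟨l, hl, hmem⟩ := ih (S.erase b) (Finset.erase_ssubset hb)
        (fun a ha c hc => hinj a (Finset.mem_of_mem_erase ha) c (Finset.mem_of_mem_erase hc))
      refine ⟨b :: l, ?_, ?_⟩
      · refine List.pairwise_cons.2 ⟨?_, hl⟩
        intro a ha
        have haS := (hmem a).1 ha
        rcases lt_or_eq_of_le (hmax a (Finset.mem_of_mem_erase haS)) with h | h
        · exact h
        · exact absurd (hinj a (Finset.mem_of_mem_erase haS) b hb h) (Finset.ne_of_mem_erase haS)
      · intro a
        simp only [List.mem_cons, hmem, Finset.mem_erase]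
        constructor
        · rintro (rfl | ⟨-, h⟩)
          · exact hb
          · exact h
        · intro h
          by_cases hab : a = b
          · exact Or.inl hab
          · exact Or.inr ⟨hab, h⟩

theorem exists_desc_list' {α : Type*} (key : α → ℝ) (S : Set α) (hfin : S.Finite)
    (hinj : ∀ a ∈ S, ∀ b ∈ S, key a = key b → a = b) :
    ∃ l : List α, l.Pairwise (fun a b => key b < key a) ∧ ∀ a, a ∈ l ↔ a ∈ S := by
  obtain ⟨l, hl, hmem⟩ := exists_desc_list key hfin.toFinset
    (fun a ha b hb => hinj a (hfin.mem_toFinset.1 ha) b (hfin.mem_toFinset.1 hb))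
  exact ⟨l, hl, fun a => (hmem a).trans hfin.mem_toFinset⟩


/-- splitting of the discrete non-abelian X-ray transform along the
rational ray γ_z (z ≠ 0) into the two half-ray ordered products and the factor F z,
and the resulting reconstruction formula for F z. -/
theorem stmt5 (n : ℕ) (hn : 1 ≤ n) (r : ℝ) (hr : 0 < r)
    (F : (Fin 2 → ℤ) → GL (Fin n) ℂ) (hF : ∀ y : Fin 2 → ℤ, ¬ ‖emb y‖ ≤ r → F y = 1)
    (z : Fin 2 → ℤ) (hz : ‖emb z‖ ≤ r) (hz0 : z ≠ 0)
    (θ : EuclideanSpace ℝ (Fin 2)) (hθ : θ = ‖emb z‖⁻¹ • emb ![-(z 1), z 0])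
    (Ap Am : GL (Fin n) ℂ)
    (hAp : Ap = oprodBy F (fun ζ => ∑ i, ((ζ i : ℝ) - (z i : ℝ)) * θ i)
      {ζ : Fin 2 → ℤ | (∃ t : ℝ, 0 < t ∧ emb ζ = emb z + t • θ) ∧ F ζ ≠ 1})
    (hAm : Am = oprodBy F (fun ζ => ∑ i, ((ζ i : ℝ) - (z i : ℝ)) * θ i)
      {ζ : Fin 2 → ℤ | (∃ t : ℝ, t < 0 ∧ emb ζ = emb z + t • θ) ∧ F ζ ≠ 1}) :
    (∀ ζ : Fin 2 → ℤ, (∃ t : ℝ, emb ζ = emb z + t • θ) → ζ ≠ z → F ζ ≠ 1 →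
      ‖emb z‖ < ‖emb ζ‖ ∧ ‖emb ζ‖ ≤ r) ∧
    discS F (emb z) θ = Ap * F z * Am ∧
    F z = Ap⁻¹ * discS F (emb z) θ * Am⁻¹ := by
  classical
  -- basic facts
  have hembinj : ∀ a b : Fin 2 → ℤ, emb a = emb b → a = b := by
    intro a b h
    funext i
    have h2 := congrFun (congrArg WithLp.ofLp h) i
    simp only [emb] at h2
    exact_mod_cast h2
  have hnz : ‖emb z‖ ≠ 0 := by
    simp only [ne_eq, norm_eq_zero]
    intro h
    apply hz0
    funext i
    have h2 := congrFun (congrArg WithLp.ofLp h) i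
    simp only [emb] at h2
    have h3 : ((z i : ℝ)) = 0 := by simpa using h2
    exact_mod_cast h3
  have hsq : ∀ (x : EuclideanSpace ℝ (Fin 2)), ‖x‖^2 = (x 0)^2 + (x 1)^2 := by
    intro x
    rw [EuclideanSpace.norm_eq, Real.sq_sqrt (by positivity)]
    simp [Fin.sum_univ_two, sq_abs]
  have hθ0 : θ 0 = ‖emb z‖⁻¹ * (-(z 1 : ℝ)) := by subst hθ; simp [emb, PiLp.smul_apply, smul_eq_mul]
  have hθ1 : θ 1 = ‖emb z‖⁻¹ * (z 0 : ℝ) := by subst hθ; simp [emb, PiLp.smul_apply, smul_eq_mul]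
  have hz2 : (z 0 : ℝ)^2 + (z 1 : ℝ)^2 = ‖emb z‖^2 := by rw [hsq]; simp [emb]
  have hθsum : (θ 0)^2 + (θ 1)^2 = 1 := by
    rw [hθ0, hθ1]
    field_simp
    linarith [hz2]
  have hcross : (z 0 : ℝ) * θ 0 + (z 1 : ℝ) * θ 1 = 0 := by rw [hθ0, hθ1]; ring
  -- key function
  set K : (Fin 2 → ℤ) → ℝ := fun ζ => ∑ i, ((ζ i : ℝ) - (z i : ℝ)) * θ i with hKdef
  have hcoord : ∀ (ζ : Fin 2 → ℤ) (t : ℝ), emb ζ = emb z + t • θ → ∀ i, (ζ i : ℝ) = (z i : ℝ) + t * θ i := by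
    intro ζ t h i
    have h2 := congrFun (congrArg WithLp.ofLp h) i
    simpa [emb, PiLp.add_apply, PiLp.smul_apply, smul_eq_mul] using h2
  have hkey : ∀ (ζ : Fin 2 → ℤ) (t : ℝ), emb ζ = emb z + t • θ → K ζ = t := by
    intro ζ t h
    have h0 := hcoord ζ t h 0
    have h1 := hcoord ζ t h 1
    simp only [hKdef, Fin.sum_univ_two, h0, h1]
    ring_nf
    linear_combination t * hθsum
  have hnormζ : ∀ (ζ : Fin 2 → ℤ) (t : ℝ), emb ζ = emb z + t • θ → ‖emb ζ‖^2 = ‖emb z‖^2 + t^2 := by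
    intro ζ t h
    have h0 := hcoord ζ t h 0
    have h1 := hcoord ζ t h 1
    rw [hsq]
    simp only [emb, h0, h1] at hz2 ⊢
    linear_combination 2 * t * hcross + t^2 * hθsum + hz2
  have ht0 : ∀ (ζ : Fin 2 → ℤ) (t : ℝ), emb ζ = emb z + t • θ → t = 0 → ζ = z := by
    intro ζ t h ht
    subst ht
    apply hembinj
    simpa using h
  -- part (i)
  have part1 : ∀ ζ : Fin 2 → ℤ, (∃ t : ℝ, emb ζ = emb z + t • θ) → ζ ≠ z → F ζ ≠ 1 →
      ‖emb z‖ < ‖emb ζ‖ ∧ ‖emb ζ‖ ≤ r := by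
    intro ζ ⟨t, ht⟩ hne hFζ
    have htne : t ≠ 0 := fun h => hne (ht0 ζ t ht h)
    have hlt : ‖emb z‖^2 < ‖emb ζ‖^2 := by
      rw [hnormζ ζ t ht]
      have : 0 < t^2 := lt_of_le_of_ne (sq_nonneg t) (Ne.symm (pow_ne_zero 2 htne))
      linarith
    constructor
    · nlinarith [norm_nonneg (emb z), norm_nonneg (emb ζ)]
    · by_contra h
      exact hFζ (hF ζ h)
  -- finiteness
  have hball : ∀ ζ : Fin 2 → ℤ, ‖emb ζ‖ ≤ r → ∀ i, ζ i ∈ Set.Icc (-⌈r⌉) ⌈r⌉ := by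
    intro ζ h i
    have h2 : ((ζ i : ℝ))^2 ≤ ‖emb ζ‖^2 := by
      rw [hsq]
      simp only [emb]
      fin_cases i
      · show ((ζ 0 : ℝ))^2 ≤ ((ζ 0 : ℝ))^2 + ((ζ 1 : ℝ))^2
        nlinarith [sq_nonneg ((ζ 1 : ℝ))]
      · show ((ζ 1 : ℝ))^2 ≤ ((ζ 0 : ℝ))^2 + ((ζ 1 : ℝ))^2
        nlinarith [sq_nonneg ((ζ 0 : ℝ))]
    have h3 : |(ζ i : ℝ)| ≤ ‖emb ζ‖ := by
      nlinarith [sq_abs ((ζ i : ℝ)), abs_nonneg ((ζ i : ℝ)), norm_nonneg (emb ζ)]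
    have h4 : |ζ i| ≤ ⌈r⌉ := by
      have h5 : |(ζ i : ℝ)| ≤ (⌈r⌉ : ℝ) := le_trans (h3.trans h) (Int.le_ceil r)
      exact_mod_cast h5
    simpa [Set.mem_Icc] using abs_le.mp h4
  have hfinball : {ζ : Fin 2 → ℤ | ‖emb ζ‖ ≤ r}.Finite := by
    apply Set.Finite.subset (Set.Finite.pi (fun _ : Fin 2 => Set.finite_Icc (-⌈r⌉) ⌈r⌉))
    intro ζ h i _
    exact hball ζ h i
  set S : Set (Fin 2 → ℤ) := {ζ | (∃ t : ℝ, emb ζ = emb z + t • θ) ∧ F ζ ≠ 1} with hSdef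
  set Sp : Set (Fin 2 → ℤ) := {ζ | (∃ t : ℝ, 0 < t ∧ emb ζ = emb z + t • θ) ∧ F ζ ≠ 1} with hSpdef
  set Sm : Set (Fin 2 → ℤ) := {ζ | (∃ t : ℝ, t < 0 ∧ emb ζ = emb z + t • θ) ∧ F ζ ≠ 1} with hSmdef
  have hSsub : S ⊆ {ζ | ‖emb ζ‖ ≤ r} := by
    rintro ζ ⟨hline, hFζ⟩
    by_contra h
    exact hFζ (hF ζ h)
  have hSfin : S.Finite := hfinball.subset hSsub
  have hSpsub : Sp ⊆ S := by rintro ζ ⟨⟨t, ht, hl⟩, hFζ⟩; exact ⟨⟨t, hl⟩, hFζ⟩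
  have hSmsub : Sm ⊆ S := by rintro ζ ⟨⟨t, ht, hl⟩, hFζ⟩; exact ⟨⟨t, hl⟩, hFζ⟩
  have hinjS : ∀ a ∈ S, ∀ b ∈ S, K a = K b → a = b := by
    rintro a ⟨⟨ta, hta⟩, -⟩ b ⟨⟨tb, htb⟩, -⟩ hk
    rw [hkey a ta hta, hkey b tb htb] at hk
    subst hk
    exact hembinj a b (hta.trans htb.symm)
  obtain ⟨lp, hlp, hlpm⟩ := exists_desc_list' K Sp (hSfin.subset hSpsub)
    (fun a ha b hb => hinjS a (hSpsub ha) b (hSpsub hb))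
  obtain ⟨lm, hlm, hlmm⟩ := exists_desc_list' K Sm (hSfin.subset hSmsub)
    (fun a ha b hb => hinjS a (hSmsub ha) b (hSmsub hb))
  have hKpos : ∀ a ∈ Sp, 0 < K a := by
    rintro a ⟨⟨t, ht, hl⟩, -⟩
    rw [hkey a t hl]
    exact ht
  have hKneg : ∀ a ∈ Sm, K a < 0 := by
    rintro a ⟨⟨t, ht, hl⟩, -⟩
    rw [hkey a t hl]
    exact ht
  have hKz : K z = 0 := by simp [hKdef]
  have htri : ∀ a ∈ S, a ∈ Sp ∨ a = z ∨ a ∈ Sm := by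
    rintro a ⟨⟨t, hl⟩, hFa⟩
    rcases lt_trichotomy t 0 with h | h | h
    · exact Or.inr (Or.inr ⟨⟨t, h, hl⟩, hFa⟩)
    · exact Or.inr (Or.inl (ht0 a t hl h))
    · exact Or.inl ⟨⟨t, h, hl⟩, hFa⟩
  have hdiscS : discS F (emb z) θ = oprodBy F K S := rfl
  have hApv : Ap = (lp.map F).prod := hAp.trans (oprodBy_eq F K Sp lp hlp hlpm)
  have hAmv : Am = (lm.map F).prod := hAm.trans (oprodBy_eq F K Sm lm hlm hlmm)
  have h2 : discS F (emb z) θ = Ap * F z * Am := by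
    by_cases hFz : F z = 1
    · have hmem : ∀ a, a ∈ lp ++ lm ↔ a ∈ S := by
        intro a
        rw [List.mem_append, hlpm, hlmm]
        constructor
        · rintro (h | h)
          exacts [hSpsub h, hSmsub h]
        · intro h
          rcases htri a h with h1 | rfl | h1
          · exact Or.inl h1
          · exact absurd hFz h.2
          · exact Or.inr h1
      have hpair : (lp ++ lm).Pairwise (fun a b => K b < K a) := by
        rw [List.pairwise_append]
        exact ⟨hlp, hlm, fun a ha b hb =>
          (hKneg b ((hlmm b).1 hb)).trans (hKpos a ((hlpm a).1 ha))⟩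
      rw [hdiscS, oprodBy_eq F K S (lp ++ lm) hpair hmem, hApv, hAmv, hFz, mul_one,
        List.map_append, List.prod_append]
    · have hzS : z ∈ S := ⟨⟨0, by simp⟩, hFz⟩
      have hmem : ∀ a, a ∈ lp ++ z :: lm ↔ a ∈ S := by
        intro a
        rw [List.mem_append, List.mem_cons, hlpm, hlmm]
        constructor
        · rintro (h | rfl | h)
          exacts [hSpsub h, hzS, hSmsub h]
        · intro h
          rcases htri a h with h1 | rfl | h1 <;> tauto
      have hpair : (lp ++ z :: lm).Pairwise (fun a b => K b < K a) := by
        rw [List.pairwise_append]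
        refine ⟨hlp, List.pairwise_cons.2 ⟨fun b hb => ?_, hlm⟩, ?_⟩
        · rw [hKz] at *
          exact hKneg b ((hlmm b).1 hb)
        · intro a ha b hb
          have hKa := hKpos a ((hlpm a).1 ha)
          rcases List.mem_cons.1 hb with rfl | hb'
          · rw [hKz]; exact hKa
          · exact (hKneg b ((hlmm b).1 hb')).trans hKa
      rw [hdiscS, oprodBy_eq F K S (lp ++ z :: lm) hpair hmem, hApv, hAmv,
        List.map_append, List.prod_append, List.map_cons, List.prod_cons, ← mul_assoc]
  refine ⟨part1, h2, ?_⟩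
  rw [h2, mul_assoc, mul_inv_cancel_right, inv_mul_cancel_left]
end
end

section
/- Let d ≥ 1, n ≥ 1, r > 0. Let f^dis : ℤ^d → M(n,ℂ) vanish outside B_r ∩ ℤ^d, and define the piecewise constant function f : ℝ^d → M(n,ℂ) by f(x) = f^dis(ζ) for x ∈ U_ζ := ζ + [−1/2, 1/2)^d, ζ ∈ ℤ^d. Let x_0 ∈ ℝ^d and θ ∈ S^{d-1}, and let γ = {x_0 + sθ : s ∈ ℝ}. For ζ ∈ ℤ^d let ℓ_ζ(γ) denote the one-dimensional Lebesgue measure of {s ∈ ℝ : x_0 + sθ ∈ U_ζ}. Then there exist R > 0 and a continuous function ψ : ℝ → M(n,ℂ) such that ψ is differentiable at all but finitely many s ∈ ℝ with derivative ψ'(s) = f(x_0 + sθ) · ψ(s), ψ(s) = I for all s ≤ −R, and for all s ≥ R, ψ(s) equals the ordered product of exp(ℓ_ζ(γ) f^dis(ζ)) over the finitely many ζ ∈ B_r ∩ ℤ^d with ℓ_ζ(γ) > 0, multiplied so that the cube U_ζ that γ meets last (i.e. with the largest values of the parameter s) contributes the leftmost factor. -/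
noncomputable section

open Matrix

/-- The length ℓ_ζ(γ) of the intersection of the line s ↦ x₀ + sθ with the half-open
unit cube U_ζ = ζ + [−1/2, 1/2)^d (note x ∈ U_ζ ↔ ∀ i, round (x i) = ζ i). -/
noncomputable def lenIn {d : ℕ} (x₀ θ : EuclideanSpace ℝ (Fin d)) (ζ : Fin d → ℤ) : ℝ :=
  (MeasureTheory.volume {s : ℝ | ∀ i, round (x₀ i + s * θ i) = ζ i}).toReal

/-- The entry time of the line s ↦ x₀ + sθ into the cube U_ζ. -/
noncomputable def entryT {d : ℕ} (x₀ θ : EuclideanSpace ℝ (Fin d)) (ζ : Fin d → ℤ) : ℝ :=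
  sInf {s : ℝ | ∀ i, round (x₀ i + s * θ i) = ζ i}

/-!
Along the line, `s ↦ cubeIndex x₀ θ s` is constant on intervals (its fibres); only finitely many
of them carry a nonzero value of `fdis`, and these all lie in `(-R, R)`. With `τ_ζ(u)` the time the
line spends in the fibre of `ζ` before `u`, the solution is the ordered product
`ψ(u) = ∏ exp (τ_ζ(u) • fdis ζ)` over the cubes met with positive length, the cube entered last
leftmost. Off the finitely many fibre endpoints only the factor of the cube containing `s` varies,
with derivative `fdis ζ` times itself, and every factor to its left is still `1`; for `s ≥ R` each
`τ_ζ(s)` is the full length `ℓ_ζ`.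
-/

open Set MeasureTheory

theorem exists_pairwise_list_of_injOn {α : Type*} (key : α → ℝ) (S : Finset α)
    (hkey : InjOn key S) :
    ∃ l : List α, l.Pairwise (fun a b => key b < key a) ∧ ∀ a, a ∈ l ↔ a ∈ S := by
  set l := S.toList.mergeSort fun a b => decide (key b ≤ key a)
  have hperm : l.Perm S.toList := List.mergeSort_perm _ _
  have hmem : ∀ a, a ∈ l ↔ a ∈ S := fun a => by rw [hperm.mem_iff, Finset.mem_toList]
  have hle : l.Pairwise fun a b => decide (key b ≤ key a) :=
    List.pairwise_mergeSort (fun a b c hab hbc => by simp only [decide_eq_true_eq] at *; linarith)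
      (fun a b => by simpa using le_total _ _) _
  refine ⟨l, (hle.and (hperm.nodup_iff.mpr S.nodup_toList)).imp_of_mem ?_, hmem⟩
  rintro a b ha hb ⟨hba, hne⟩
  exact (of_decide_eq_true hba).lt_of_ne
    fun h => hne (hkey ((hmem a).mp ha) ((hmem b).mp hb) h.symm)

theorem oprodBy_eq_of_pairwise {α G : Type*} [Monoid G] {Φ : α → G} {key : α → ℝ}
    {supp : Set α} {l : List α} (hl : l.Pairwise fun a b => key b < key a)
    (hmem : ∀ a, a ∈ l ↔ a ∈ supp) :
    oprodBy Φ key supp = (l.map Φ).prod := by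
  have h : ∃ l' : List α, l'.Pairwise (fun a b => key b < key a) ∧ ∀ a, a ∈ l' ↔ a ∈ supp :=
    ⟨l, hl, hmem⟩
  have : Std.Irrefl fun a b => key b < key a := ⟨fun a => lt_irrefl (key a)⟩
  rw [oprodBy, dif_pos h,
    h.choose_spec.1.eq_of_mem_iff hl fun a => (h.choose_spec.2 a).trans (hmem a).symm]

def occupation (I : Set ℝ) (a u : ℝ) : ℝ := ∫ t in a..u, I.indicator 1 t

section occupation

variable {I : Set ℝ} {a u s : ℝ}

theorem intervalIntegrable_indicator_one (hI : MeasurableSet I) (a b : ℝ) :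
    IntervalIntegrable (I.indicator (1 : ℝ → ℝ)) volume a b :=
  ⟨(integrableOn_const (by simp)).indicator hI, (integrableOn_const (by simp)).indicator hI⟩

theorem continuous_occupation (hI : MeasurableSet I) : Continuous (occupation I a) :=
  intervalIntegral.continuous_primitive (intervalIntegrable_indicator_one hI) a

theorem hasDerivAt_occupation (hI : MeasurableSet I) (hs : s ∉ frontier I) :
    HasDerivAt (occupation I a) (I.indicator 1 s) s :=
  intervalIntegral.integral_hasDerivAt_right (intervalIntegrable_indicator_one hI a s)
    (measurable_one.indicator hI).stronglyMeasurable.stronglyMeasurableAtFilter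
    (continuousOn_const.continuousAt_indicator hs)

theorem occupation_eq_zero (ha : I ⊆ Ioi a) (hu : I ⊆ Ioi u) : occupation I a u = 0 := by
  refine (intervalIntegral.integral_congr fun t ht => indicator_of_notMem ?_ _).trans
    intervalIntegral.integral_zero
  exact fun htI => (max_lt (ha htI) (hu htI)).not_ge ht.2

theorem occupation_eq_measureReal (hI : MeasurableSet I) (hau : a ≤ u) (ha : I ⊆ Ioi a)
    (hu : I ⊆ Iic u) : occupation I a u = volume.real I := by
  rw [occupation, intervalIntegral.integral_of_le hau, integral_indicator_one hI,
    measureReal_restrict_apply hI, inter_eq_left.mpr fun t ht => mem_Ioc.mpr ⟨ha ht, hu ht⟩]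

end occupation

section IntervalsOfReals

variable {I J : Set ℝ} {p q : ℝ}

theorem lt_of_sInf_lt_of_disjoint (hI : I.OrdConnected) (hIJ : Disjoint I J) (hp : p ∈ I)
    (hq : q ∈ J) (h : sInf I < q) : p < q := by
  obtain ⟨p', hp', hp'q⟩ := exists_lt_of_csInf_lt ⟨p, hp⟩ h
  by_contra! hqp
  exact hIJ.notMem_of_mem_right hq (hI.out hp' hp ⟨hp'q.le, hqp⟩)

theorem exists_mem_sInf_lt_of_measure_ne_zero (hI : BddBelow I) (h : volume I ≠ 0) :
    ∃ p ∈ I, sInf I < p := by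
  by_contra! hle
  refine h (Subsingleton.measure_zero (fun p hp q hq => ?_) volume)
  exact (hle p hp).trans (csInf_le hI hq) |>.antisymm ((hle q hq).trans (csInf_le hI hp))

theorem mem_frontier_of_measure_eq_zero (hp : p ∈ I) (h : volume I = 0) : p ∈ frontier I :=
  ⟨subset_closure hp, by simp [Measure.interior_eq_empty_of_null h]⟩

theorem Set.OrdConnected.finite_frontier (hI : I.OrdConnected) (hb : BddBelow I)
    (ha : BddAbove I) : (frontier I).Finite := by
  rcases I.eq_empty_or_nonempty with rfl | hne
  · simp
  refine (toFinite {sInf I, sSup I}).subset ?_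
  rw [← Icc_sdiff_Ioo_same (csInf_le_csSup hne hb ha)]
  refine fun x hx => ⟨closure_minimal (subset_Icc_csInf_csSup hb ha) isClosed_Icc hx.1, ?_⟩
  have hIoo : Ioo (sInf I) (sSup I) ⊆ I :=
    IsConnected.Ioo_csInf_csSup_subset ⟨hne, hI.isPreconnected⟩ hb ha
  exact fun hxIoo => hx.2 (interior_maximal hIoo isOpen_Ioo hxIoo)

end IntervalsOfReals

section OrderedExp

open NormedSpace

variable {𝔸 α : Type*} [NormedRing 𝔸] [NormedAlgebra ℝ 𝔸] [CompleteSpace 𝔸]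

theorem hasDerivAt_exp_occupation_smul {I : Set ℝ} {a s : ℝ} (x : 𝔸) (hI : MeasurableSet I)
    (hs : s ∉ frontier I) :
    HasDerivAt (fun u => exp (occupation I a u • x))
      (I.indicator (1 : ℝ → ℝ) s • (x * exp (occupation I a s • x))) s :=
  (hasDerivAt_exp_smul_const' x _).scomp s (hasDerivAt_occupation hI hs)

def orderedExpProd (z : ℝ → α) (A : α → 𝔸) (a : ℝ) (L : List α) (u : ℝ) : 𝔸 :=
  (L.map fun ζ => exp (occupation (z ⁻¹' {ζ}) a u • A ζ)).prod

variable {z : ℝ → α} (A : α → 𝔸) {a : ℝ} {L : List α}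

theorem continuous_orderedExpProd (hz : ∀ ζ, MeasurableSet (z ⁻¹' {ζ})) :
    Continuous (orderedExpProd z A a L) := by
  refine continuous_list_prod _ fun ζ _ => ?_
  have hexp : Continuous fun t : ℝ => exp (t • A ζ) :=
    continuous_iff_continuousAt.mpr fun t => (hasDerivAt_exp_smul_const' (A ζ) t).continuousAt
  exact hexp.comp (continuous_occupation (hz ζ))

theorem hasDerivAt_orderedExpProd [DecidableEq α] (hz : ∀ ζ, MeasurableSet (z ⁻¹' {ζ}))
    {s : ℝ} (hs : ∀ ζ ∈ L, s ∉ frontier (z ⁻¹' {ζ})) (ha : ∀ ζ ∈ L, z ⁻¹' {ζ} ⊆ Ioi a)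
    (hL : L.Pairwise fun ζ ζ' => ∀ p ∈ z ⁻¹' {ζ'}, ∀ q ∈ z ⁻¹' {ζ}, p < q) :
    HasDerivAt (orderedExpProd z A a L)
      ((if z s ∈ L then A (z s) else 0) * orderedExpProd z A a L s) s := by
  induction L with
  | nil => exact (hasDerivAt_const s (1 : 𝔸)).congr_deriv (by simp)
  | cons ζ L ih =>
    rw [List.pairwise_cons] at hL
    have hζ := hasDerivAt_exp_occupation_smul (a := a) (A ζ) (hz ζ) (hs ζ (by simp))
    have hrest := ih (fun ζ' h => hs ζ' (by simp [h])) (fun ζ' h => ha ζ' (by simp [h])) hL.2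
    refine (hζ.mul hrest).congr_deriv ?_
    by_cases hsζ : z s = ζ
    · subst hsζ
      have hnot : z s ∉ L := fun h => lt_irrefl s (hL.1 _ h s rfl s rfl)
      simp [orderedExpProd, hnot, mul_assoc]
    · have hind : (z ⁻¹' {ζ}).indicator (1 : ℝ → ℝ) s = 0 :=
        indicator_of_notMem (show s ∉ z ⁻¹' {ζ} from hsζ) _
      by_cases hmem : z s ∈ L
      · have hocc : occupation (z ⁻¹' {ζ}) a s = 0 :=
          occupation_eq_zero (ha ζ (by simp)) fun q hq => hL.1 _ hmem s rfl q hq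
        simp [orderedExpProd, hind, hocc, hmem]
      · simp [orderedExpProd, hmem, hsζ]

theorem exists_pairwise_list_of_fibers (hz : ∀ ζ, (z ⁻¹' {ζ}).OrdConnected) {S : Set α}
    (hS : S.Finite) (hbdd : ∀ ζ ∈ S, BddBelow (z ⁻¹' {ζ}))
    (hpos : ∀ ζ ∈ S, volume (z ⁻¹' {ζ}) ≠ 0) :
    ∃ L : List α, L.Pairwise (fun ζ ζ' => sInf (z ⁻¹' {ζ'}) < sInf (z ⁻¹' {ζ})) ∧
      (∀ ζ, ζ ∈ L ↔ ζ ∈ S) ∧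
      L.Pairwise fun ζ ζ' => ∀ p ∈ z ⁻¹' {ζ'}, ∀ q ∈ z ⁻¹' {ζ}, p < q := by
  have hdisj : ∀ {ζ ζ'}, ζ ≠ ζ' → Disjoint (z ⁻¹' {ζ}) (z ⁻¹' {ζ'}) := fun h =>
    (disjoint_singleton.mpr h).preimage z
  have hinj : InjOn (fun ζ => sInf (z ⁻¹' {ζ})) hS.toFinset := by
    intro ζ hζ ζ' hζ' hkey
    simp only [Finite.coe_toFinset] at hζ hζ'
    by_contra hne
    obtain ⟨p, hp, hlt⟩ := exists_mem_sInf_lt_of_measure_ne_zero (hbdd ζ hζ) (hpos ζ hζ)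
    obtain ⟨q, hq, hlt'⟩ := exists_mem_sInf_lt_of_measure_ne_zero (hbdd ζ' hζ') (hpos ζ' hζ')
    exact (lt_of_sInf_lt_of_disjoint (hz ζ) (hdisj hne) hp hq (hkey.trans_lt hlt')).not_gt
      (lt_of_sInf_lt_of_disjoint (hz ζ') (hdisj hne).symm hq hp (hkey.symm.trans_lt hlt))
  obtain ⟨L, hLkey, hLmem⟩ := exists_pairwise_list_of_injOn _ _ hinj
  simp only [Finite.mem_toFinset] at hLmem
  refine ⟨L, hLkey, hLmem, hLkey.imp_of_mem fun {ζ ζ'} hζ _ hlt p hp q hq => ?_⟩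
  exact lt_of_sInf_lt_of_disjoint (hz ζ') (hdisj fun h => hlt.ne (h ▸ rfl)) hp hq
    (hlt.trans_le (csInf_le (hbdd ζ ((hLmem ζ).mp hζ)) hq))

theorem exists_ode_solution_eq_oprodBy (A : α → 𝔸) (z : ℝ → α) {F : Set α} (hF : F.Finite)
    (hA : ∀ ζ ∉ F, A ζ = 0) (hz : ∀ ζ, (z ⁻¹' {ζ}).OrdConnected) (R : ℝ)
    (hR : ∀ ζ ∈ F, z ⁻¹' {ζ} ⊆ Ioo (-R) R) :
    ∃ ψ : ℝ → 𝔸, Continuous ψ ∧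
      (∃ E : Set ℝ, E.Finite ∧ ∀ s ∉ E, HasDerivAt ψ (A (z s) * ψ s) s) ∧
      (∀ s ≤ -R, ψ s = 1) ∧
      (∀ s ≥ R, ψ s = oprodBy (fun ζ => exp (volume.real (z ⁻¹' {ζ}) • A ζ))
        (fun ζ => sInf (z ⁻¹' {ζ})) {ζ | ζ ∈ F ∧ 0 < volume.real (z ⁻¹' {ζ})}) := by
  classical
  have hmeas : ∀ ζ, MeasurableSet (z ⁻¹' {ζ}) := fun ζ => (hz ζ).measurableSet
  have hbdd : ∀ ζ ∈ F, BddBelow (z ⁻¹' {ζ}) := fun ζ hζ =>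
    ⟨-R, fun p hp => (hR ζ hζ hp).1.le⟩
  set supp := {ζ | ζ ∈ F ∧ 0 < volume.real (z ⁻¹' {ζ})}
  have hpos : ∀ ζ ∈ supp, volume (z ⁻¹' {ζ}) ≠ 0 := fun ζ hζ =>
    (ENNReal.toReal_pos_iff.mp hζ.2).1.ne'
  obtain ⟨L, hLkey, hLmem, hLprec⟩ := exists_pairwise_list_of_fibers hz
    (hF.subset fun ζ hζ => hζ.1) (fun ζ hζ => hbdd ζ hζ.1) hpos
  have hLF : ∀ ζ ∈ L, ζ ∈ F := fun ζ hζ => ((hLmem ζ).mp hζ).1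
  refine ⟨orderedExpProd z A (-R) L, continuous_orderedExpProd A hmeas,
    ⟨⋃ ζ ∈ F, frontier (z ⁻¹' {ζ}), ?_, ?_⟩, ?_, ?_⟩
  · exact hF.biUnion fun ζ hζ => (hz ζ).finite_frontier (hbdd ζ hζ)
      ⟨R, fun p hp => (hR ζ hζ hp).2.le⟩
  · intro s hs
    simp only [mem_iUnion, not_exists] at hs
    convert hasDerivAt_orderedExpProd A hmeas (fun ζ hζ => hs ζ (hLF ζ hζ))
      (fun ζ hζ => (hR ζ (hLF ζ hζ)).trans Ioo_subset_Ioi_self) hLprec using 2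
    split_ifs with hsL
    · rfl
    by_contra hAs
    have hsF : z s ∈ F := by_contra fun h => hAs (hA _ h)
    have hnull : volume (z ⁻¹' {z s}) = 0 := by
      by_contra h
      exact hsL ((hLmem _).mpr ⟨hsF, ENNReal.toReal_pos h
        ((measure_mono (hR _ hsF)).trans_lt measure_Ioo_lt_top).ne⟩)
    exact hs _ hsF (mem_frontier_of_measure_eq_zero rfl hnull)
  · intro s hs
    refine List.prod_eq_one fun x hx => ?_
    obtain ⟨ζ, hζ, rfl⟩ := List.mem_map.mp hx
    have hIoi := (hR ζ (hLF ζ hζ)).trans Ioo_subset_Ioi_self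
    rw [occupation_eq_zero hIoi (hIoi.trans (Ioi_subset_Ioi hs)), zero_smul, exp_zero]
  · intro s hs
    rw [oprodBy_eq_of_pairwise hLkey hLmem, orderedExpProd]
    refine congrArg List.prod (List.map_congr_left fun ζ hζ => ?_)
    obtain ⟨p, hp⟩ := nonempty_of_measure_ne_zero (hpos ζ ((hLmem ζ).mp hζ))
    have hsub := hR ζ (hLF ζ hζ)
    rw [occupation_eq_measureReal (hmeas ζ) (by linarith [(hsub hp).1, (hsub hp).2])
      (hsub.trans Ioo_subset_Ioi_self)
      (hsub.trans (Ioo_subset_Iio_self.trans (Iio_subset_Iic hs)))]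

end OrderedExp

section Lattice

variable {d : ℕ}

theorem finite_setOf_norm_emb_le (r : ℝ) : {ζ : Fin d → ℤ | ‖emb ζ‖ ≤ r}.Finite := by
  refine (Set.Finite.pi' fun _ => finite_Icc (-⌈r⌉) ⌈r⌉).subset fun ζ hζ i => ?_
  have hle : |(ζ i : ℝ)| ≤ ⌈r⌉ := ((PiLp.norm_apply_le (emb ζ) i).trans hζ).trans (Int.le_ceil r)
  exact abs_le.mp (by exact_mod_cast hle)

def cubeIndex (x₀ θ : EuclideanSpace ℝ (Fin d)) (s : ℝ) : Fin d → ℤ :=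
  fun i => round (x₀ i + s * θ i)

variable {x₀ θ : EuclideanSpace ℝ (Fin d)}

theorem preimage_cubeIndex_singleton (ζ : Fin d → ℤ) :
    cubeIndex x₀ θ ⁻¹' {ζ} = {s | ∀ i, round (x₀ i + s * θ i) = ζ i} := by
  ext s
  simp [cubeIndex, funext_iff]

theorem ordConnected_preimage_cubeIndex_singleton (ζ : Fin d → ℤ) :
    (cubeIndex x₀ θ ⁻¹' {ζ}).OrdConnected := by
  rw [preimage_cubeIndex_singleton, ← iInter_ofPred]
  refine ordConnected_iInter fun i => ?_
  have hround : Monotone (round : ℝ → ℤ) := fun a b h => by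
    simpa only [round_eq] using Int.floor_mono (by linarith)
  rcases le_total 0 (θ i) with hθ | hθ
  · exact ordConnected_singleton.preimage_mono
      (hround.comp fun a b h => by simp only; nlinarith)
  · exact ordConnected_singleton.preimage_anti
      (hround.comp_antitone fun a b h => by simp only; nlinarith)

theorem norm_le_sqrt_card_of_abs_le_one (v : EuclideanSpace ℝ (Fin d)) (hv : ∀ i, |v i| ≤ 1) :
    ‖v‖ ≤ √d := by
  rw [EuclideanSpace.norm_eq]
  refine Real.sqrt_le_sqrt ?_
  calc ∑ i, ‖v i‖ ^ 2 ≤ ∑ _i : Fin d, (1 : ℝ) :=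
        Finset.sum_le_sum fun i _ => pow_le_one₀ (norm_nonneg _) (hv i)
    _ = d := by simp

theorem abs_le_of_cubeIndex_eq (hθ : ‖θ‖ = 1) {s : ℝ} {ζ : Fin d → ℤ}
    (h : cubeIndex x₀ θ s = ζ) : |s| ≤ ‖x₀‖ + ‖emb ζ‖ + √d := by
  have hcube : ‖x₀ + s • θ - emb ζ‖ ≤ √d := by
    refine norm_le_sqrt_card_of_abs_le_one _ fun i => ?_
    have happ : (x₀ + s • θ - emb ζ) i = x₀ i + s * θ i - round (x₀ i + s * θ i) := by
      simp [emb, ← h, cubeIndex]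
    rw [happ]
    exact (abs_sub_round _).trans (by norm_num)
  calc |s| = ‖s • θ‖ := by rw [norm_smul, hθ, mul_one, Real.norm_eq_abs]
    _ = ‖(x₀ + s • θ - emb ζ) + emb ζ - x₀‖ := by congr 1; abel
    _ ≤ ‖x₀ + s • θ - emb ζ‖ + ‖emb ζ‖ + ‖x₀‖ :=
      (norm_sub_le _ _).trans (by gcongr; exact norm_add_le _ _)
    _ ≤ ‖x₀‖ + ‖emb ζ‖ + √d := by linarith

end Lattice

theorem stmt13_general (d n : ℕ) (r : ℝ)
    (fdis : (Fin d → ℤ) → Matrix (Fin n) (Fin n) ℂ)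
    (hfdis : ∀ z : Fin d → ℤ, ¬ ‖emb z‖ ≤ r → fdis z = 0)
    (f : EuclideanSpace ℝ (Fin d) → Matrix (Fin n) (Fin n) ℂ)
    (hf : ∀ x, f x = fdis fun i => round (x i))
    (x₀ θ : EuclideanSpace ℝ (Fin d)) (hθ : ‖θ‖ = 1) :
    ∃ R : ℝ, 0 < R ∧ ∃ ψ : ℝ → Matrix (Fin n) (Fin n) ℂ,
      Continuous ψ ∧
      (∃ E : Set ℝ, E.Finite ∧ ∀ s ∉ E, ∀ i j,
        HasDerivAt (fun u => ψ u i j) ((f (x₀ + s • θ) * ψ s) i j) s) ∧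
      (∀ s ≤ -R, ψ s = 1) ∧
      (∀ s ≥ R, ψ s =
        oprodBy (fun ζ => NormedSpace.exp ((lenIn x₀ θ ζ : ℂ) • fdis ζ))
          (entryT x₀ θ)
          {ζ : Fin d → ℤ | ‖emb ζ‖ ≤ r ∧ 0 < lenIn x₀ θ ζ}) := by
  -- Any algebra norm will do: the conclusion only involves the topology of the matrices.
  let : NormedRing (Matrix (Fin n) (Fin n) ℂ) := Matrix.linftyOpNormedRing
  let : NormedAlgebra ℝ (Matrix (Fin n) (Fin n) ℂ) := Matrix.linftyOpNormedAlgebra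
  set R := ‖x₀‖ + |r| + √d + 1
  have hR : 0 < R := by positivity
  have hfiber : ∀ ζ ∈ {ζ : Fin d → ℤ | ‖emb ζ‖ ≤ r}, cubeIndex x₀ θ ⁻¹' {ζ} ⊆ Ioo (-R) R :=
    fun ζ hζ s hs => abs_lt.mp <| (abs_le_of_cubeIndex_eq hθ hs).trans_lt <| by
      linarith [le_abs_self r, show ‖emb ζ‖ ≤ r from hζ]
  obtain ⟨ψ, hcont, ⟨E, hE, hderiv⟩, hbelow, habove⟩ :=
    exists_ode_solution_eq_oprodBy fdis (cubeIndex x₀ θ) (finite_setOf_norm_emb_le r) hfdis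
      ordConnected_preimage_cubeIndex_singleton R hfiber
  refine ⟨R, hR, ψ, hcont, ⟨E, hE, fun s hs i j => ?_⟩, hbelow, fun s hs => ?_⟩
  · rw [hf]
    exact (LinearMap.toContinuousLinearMap (Matrix.entryLinearMap ℝ ℂ i j)).hasFDerivAt
      |>.comp_hasDerivAt s (hderiv s hs)
  · have hlen : lenIn x₀ θ = fun ζ => volume.real (cubeIndex x₀ θ ⁻¹' {ζ}) := by
      ext ζ; rw [lenIn, preimage_cubeIndex_singleton]; rfl
    have hentry : entryT x₀ θ = fun ζ => sInf (cubeIndex x₀ θ ⁻¹' {ζ}) := by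
      ext ζ; rw [entryT, preimage_cubeIndex_singleton]
    rw [habove s hs, hlen, hentry]
    simp only [Complex.coe_smul]
    rfl

/-- for the piecewise constant function f with value f^dis(ζ) on the unit
cube U_ζ (f^dis supported in B_r ∩ ℤ^d), along any oriented line the solution ψ of
dψ/ds = f(x₀ + sθ)ψ with ψ = I near −∞ exists and equals, for large s, the ordered
product of exp(ℓ_ζ(γ) f^dis(ζ)) over the cubes U_ζ, ζ ∈ B_r ∩ ℤ^d, met by the line,
the cube met last contributing the leftmost factor. -/
theorem stmt13 (d n : ℕ) (hd : 1 ≤ d) (hn : 1 ≤ n) (r : ℝ) (hr : 0 < r)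
    (fdis : (Fin d → ℤ) → Matrix (Fin n) (Fin n) ℂ)
    (hfdis : ∀ z : Fin d → ℤ, ¬ ‖emb z‖ ≤ r → fdis z = 0)
    (f : EuclideanSpace ℝ (Fin d) → Matrix (Fin n) (Fin n) ℂ)
    (hf : ∀ x, f x = fdis fun i => round (x i))
    (x₀ θ : EuclideanSpace ℝ (Fin d)) (hθ : ‖θ‖ = 1) :
    ∃ R : ℝ, 0 < R ∧ ∃ ψ : ℝ → Matrix (Fin n) (Fin n) ℂ,
      Continuous ψ ∧
      (∃ E : Set ℝ, E.Finite ∧ ∀ s ∉ E, ∀ i j,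
        HasDerivAt (fun u => ψ u i j) ((f (x₀ + s • θ) * ψ s) i j) s) ∧
      (∀ s ≤ -R, ψ s = 1) ∧
      (∀ s ≥ R, ψ s =
        oprodBy (fun ζ => NormedSpace.exp ((lenIn x₀ θ ζ : ℂ) • fdis ζ))
          (entryT x₀ θ)
          {ζ : Fin d → ℤ | ‖emb ζ‖ ≤ r ∧ 0 < lenIn x₀ θ ζ}) :=
  stmt13_general d n r fdis hfdis f hf x₀ θ hθ
end
end
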